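/- If p is a prime congruent to 3 modulo 4, m is a totient, and p does not divide any element of φ^{-1}(m), then A((p-1)·m) ≥ A(m); moreover if m ∈ 𝒱^ℓ then (p-1)·m ∈ 𝒱^{ℓ+1}. -/

import Mathlib

/-!
Multiplying by `p` maps `φ⁻¹(m)` injectively into `φ⁻¹((p - 1) m)`, because
`φ(p n) = (p - 1) φ(n)` when `p ∤ n`; the fibres of `φ` are finite since `n ≤ 2 φ(n)²`.
As `p ≡ 3 (mod 4)`, `p - 1` is exactly divisible by `2`, so the exact power of `2` dividing
`m` goes up by one.
-/

open Filter Topology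
open scoped Classical

noncomputable section

/-- The multiplicity `A(m)`: the number of positive integers `n` with `φ(n) = m`. -/
def totA (m : ℕ) : ℕ := Set.ncard {n : ℕ | 0 < n ∧ n.totient = m}

/-- The set of totients `𝒱`. -/
def totV : Set ℕ := {m : ℕ | ∃ n : ℕ, 0 < n ∧ n.totient = m}

/-- The stratum `𝒱^ℓ` of totients congruent to `2^ℓ` mod `2^(ℓ+1)`. -/
def totVl (ℓ : ℕ) : Set ℕ := {m ∈ totV | m % 2 ^ (ℓ + 1) = 2 ^ ℓ}

/-- `U(x)`: the number of elements of `U` not exceeding `x`. -/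
def countUpTo (U : Set ℕ) (x : ℝ) : ℕ := Set.ncard {n ∈ U | (n : ℝ) ≤ x}

/-- `π(x)`: the number of primes not exceeding `x`. -/
def primePi (x : ℝ) : ℕ := Set.ncard {p : ℕ | p.Prime ∧ (p : ℝ) ≤ x}

/-- `S^ℓ(x) = Σ_{m ∈ 𝒱^ℓ, m ≤ x} A(m)`. -/
def totS (ℓ : ℕ) (x : ℝ) : ℕ :=
  ∑ m ∈ Finset.range (⌊x⌋₊ + 1), if m ∈ totVl ℓ then totA m else 0

end

open Nat

theorem Nat.le_totient_sq_of_odd {n : ℕ} (hn : Odd n) : n ≤ φ n ^ 2 := by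
  induction n using induction_on_primes with
  | zero => simp at hn
  | one => simp
  | prime_mul p a hp ih =>
    have hp3 : 3 ≤ p := by
      obtain ⟨r, hr⟩ := (Nat.odd_mul.mp hn).1
      have := hp.two_le
      omega
    have hp_le : p ≤ φ p ^ 2 := by
      rw [totient_prime hp]
      nlinarith [Nat.sub_add_cancel hp.one_le]
    calc p * a ≤ φ p ^ 2 * φ a ^ 2 := Nat.mul_le_mul hp_le (ih (Nat.odd_mul.mp hn).2)
      _ = (φ p * φ a) ^ 2 := by ring
      _ ≤ φ (p * a) ^ 2 := Nat.pow_le_pow_left (totient_super_multiplicative p a) 2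

theorem Nat.le_two_mul_totient_sq (n : ℕ) : n ≤ 2 * φ n ^ 2 := by
  rcases eq_or_ne n 0 with rfl | hn
  · simp
  obtain ⟨k | k, m, hm, rfl⟩ := exists_eq_two_pow_mul_odd hn
  · simpa using (le_totient_sq_of_odd hm).trans (Nat.le_mul_of_pos_left _ two_pos)
  · rw [totient_mul ((coprime_two_left.mpr hm).pow_left _), totient_prime_pow_succ prime_two]
    calc 2 ^ (k + 1) * m ≤ 2 * (2 ^ k) ^ 2 * φ m ^ 2 := by
          gcongr ?_ * ?_
          · rw [pow_succ']
            exact Nat.mul_le_mul_left 2 (Nat.le_self_pow two_ne_zero _)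
          · exact le_totient_sq_of_odd hm
      _ = 2 * (2 ^ k * (2 - 1) * φ m) ^ 2 := by ring

theorem Nat.finite_setOf_totient_eq (m : ℕ) : {n : ℕ | φ n = m}.Finite :=
  (Set.finite_Iic (2 * m ^ 2)).subset fun n (hn : φ n = m) =>
    show n ≤ 2 * m ^ 2 from hn ▸ Nat.le_two_mul_totient_sq n

theorem Nat.mod_two_pow_succ_eq_two_pow_iff {m ℓ : ℕ} :
    m % 2 ^ (ℓ + 1) = 2 ^ ℓ ↔ ∃ k, m = 2 ^ ℓ * (2 * k + 1) := by
  constructor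
  · intro h
    refine ⟨m / 2 ^ (ℓ + 1), ?_⟩
    conv_lhs => rw [← Nat.div_add_mod m (2 ^ (ℓ + 1)), h]
    ring
  · rintro ⟨k, rfl⟩
    rw [show 2 ^ ℓ * (2 * k + 1) = 2 ^ (ℓ + 1) * k + 2 ^ ℓ by ring, Nat.mul_add_mod,
      Nat.mod_eq_of_lt (Nat.pow_lt_pow_succ one_lt_two)]

theorem Nat.mul_mod_two_pow_succ_of_mod_two_pow_succ {a b i j : ℕ}
    (ha : a % 2 ^ (i + 1) = 2 ^ i) (hb : b % 2 ^ (j + 1) = 2 ^ j) :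
    a * b % 2 ^ (i + j + 1) = 2 ^ (i + j) := by
  obtain ⟨k, rfl⟩ := mod_two_pow_succ_eq_two_pow_iff.mp ha
  obtain ⟨l, rfl⟩ := mod_two_pow_succ_eq_two_pow_iff.mp hb
  exact mod_two_pow_succ_eq_two_pow_iff.mpr ⟨2 * k * l + k + l, by ring⟩

theorem mapsTo_prime_mul_totient_fiber {p m : ℕ} (hp : p.Prime)
    (hnd : ∀ n : ℕ, 0 < n → φ n = m → ¬ p ∣ n) :
    Set.MapsTo (p * ·) {n | 0 < n ∧ φ n = m} {n | 0 < n ∧ φ n = (p - 1) * m} := by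
  rintro n ⟨hn, rfl⟩
  exact ⟨Nat.mul_pos hp.pos hn, totient_mul_of_prime_of_not_dvd hp (hnd n hn rfl)⟩

theorem totA_le_totA_sub_one_mul {p m : ℕ} (hp : p.Prime)
    (hnd : ∀ n : ℕ, 0 < n → φ n = m → ¬ p ∣ n) : totA m ≤ totA ((p - 1) * m) :=
  Set.ncard_le_ncard_of_injOn (p * ·) (mapsTo_prime_mul_totient_fiber hp hnd)
    (fun _ _ _ _ h => Nat.eq_of_mul_eq_mul_left hp.pos h)
    ((finite_setOf_totient_eq _).subset fun _ hn => hn.2)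

theorem sub_one_mul_mem_totVl {p m ℓ : ℕ} (hp : p.Prime) (hp4 : p % 4 = 3)
    (hnd : ∀ n : ℕ, 0 < n → φ n = m → ¬ p ∣ n) (hm : m ∈ totVl ℓ) :
    (p - 1) * m ∈ totVl (ℓ + 1) := by
  obtain ⟨⟨n, hn, hφ⟩, hmod⟩ := hm
  refine ⟨⟨p * n, mapsTo_prime_mul_totient_fiber hp hnd ⟨hn, hφ⟩⟩, ?_⟩
  have hp_mod : (p - 1) % 2 ^ (1 + 1) = 2 ^ 1 := by omega
  rw [mul_comm]
  exact mul_mod_two_pow_succ_of_mod_two_pow_succ hmod hp_mod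

theorem stmt_19_general (p : ℕ) (hp : p.Prime) (hp4 : p % 4 = 3) (m : ℕ)
    (hnd : ∀ n : ℕ, 0 < n → n.totient = m → ¬ p ∣ n) :
    totA m ≤ totA ((p - 1) * m) ∧
    (∀ ℓ : ℕ, 1 ≤ ℓ → m ∈ totVl ℓ → (p - 1) * m ∈ totVl (ℓ + 1)) :=
  ⟨totA_le_totA_sub_one_mul hp hnd, fun _ _ => sub_one_mul_mem_totVl hp hp4 hnd⟩

/-- If `p ≡ 3 (mod 4)` is prime, `m` is a totient, and `p` divides no element of
`φ⁻¹(m)`, then `A((p-1)·m) ≥ A(m)`; moreover if `m ∈ 𝒱^ℓ` then `(p-1)·m ∈ 𝒱^{ℓ+1}`. -/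
theorem stmt_19 (p : ℕ) (hp : p.Prime) (hp4 : p % 4 = 3) (m : ℕ) (hm : m ∈ totV)
    (hnd : ∀ n : ℕ, 0 < n → n.totient = m → ¬ p ∣ n) :
    totA m ≤ totA ((p - 1) * m) ∧
    (∀ ℓ : ℕ, 1 ≤ ℓ → m ∈ totVl ℓ → (p - 1) * m ∈ totVl (ℓ + 1)) :=
  stmt_19_general p hp hp4 m hnd
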